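/- arXiv:1405.2722 — 3 statements merged into one kernel-verified Lean document; each statement's English description precedes it below -/
import Mathlib

section
/- For all real x and all positive real ξ, the log-logistic function satisfies log g(x) ≥ log g(ξ) + (x-ξ)/2 - λ(ξ)(x² - ξ²), where g(x) = 1/(1+e^{-x}) and λ(ξ) = (g(ξ) - 1/2)/(2ξ). -/
noncomputable def g (x : ℝ) : ℝ := (1 + Real.exp (-x))⁻¹

noncomputable def lam (ξ : ℝ) : ℝ := (g ξ - 1/2) / (2 * ξ)

/-!
Writing `g y = exp (y/2) / (2 cosh (y/2))` gives `log g y = y/2 - log 2 - log cosh (y/2)` and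
`lam ξ = tanh (ξ/2) / (4ξ)`, so with `t = x/2`, `s = ξ/2` the bound says that
`F t = log cosh t - (tanh s / 2s) t²` is maximal at `t = s`. `F` is even, and for `t > 0`
`F' t = t (tanh t / t - tanh s / s)`, which changes sign from `+` to `-` at `s` because
`tanh t / t` is decreasing (equivalently `sinh t cosh t ≥ t`, i.e. `sinh 2t ≥ 2t`).
-/

open Real Set

lemma g_eq_exp_div_two_mul_cosh (y : ℝ) : g y = exp (y / 2) / (2 * cosh (y / 2)) := by
  have hmul : exp (y / 2) * exp (-(y / 2)) = 1 := by rw [← exp_add]; simp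
  have hsq : exp (-y) = exp (-(y / 2)) ^ 2 := by rw [← exp_nat_mul]; ring_nf
  rw [g, cosh_eq, hsq, eq_div_iff (by positivity)]
  field_simp
  linear_combination (-exp (-(y / 2))) * hmul

lemma log_g (y : ℝ) : log (g y) = y / 2 - log 2 - log (cosh (y / 2)) := by
  rw [g_eq_exp_div_two_mul_cosh, log_div (exp_pos _).ne' (by positivity),
    log_mul two_ne_zero (cosh_pos _).ne', log_exp]
  ring

lemma lam_eq (ξ : ℝ) : lam ξ = tanh (ξ / 2) / (4 * ξ) := by
  have hg : g ξ - 1 / 2 = tanh (ξ / 2) / 2 := by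
    rw [g_eq_exp_div_two_mul_cosh, tanh_eq_sinh_div_cosh, ← cosh_add_sinh (ξ / 2)]
    field_simp [(cosh_pos (ξ / 2)).ne']
    ring
  rw [lam, hg, div_div]
  ring

namespace Real

lemma antitoneOn_tanh_div_self : AntitoneOn (fun t => tanh t / t) (Ioi 0) := by
  have hfun : (fun t => tanh t / t) = fun t => sinh t / (t * cosh t) := by
    funext t; rw [tanh_eq_sinh_div_cosh, div_div, mul_comm]
  have hderiv (t : ℝ) (ht : 0 < t) : HasDerivAt (fun t => sinh t / (t * cosh t))
      ((t - sinh t * cosh t) / (t * cosh t) ^ 2) t := by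
    refine ((hasDerivAt_sinh t).div ((hasDerivAt_id' t).mul (hasDerivAt_cosh t))
      (mul_pos ht (cosh_pos t)).ne').congr_deriv ?_
    simp only [Pi.mul_apply]
    congr 1
    linear_combination t * cosh_sq_sub_sinh_sq t
  rw [hfun]
  refine antitoneOn_of_hasDerivWithinAt_nonpos (convex_Ioi 0)
    (fun t ht => (hderiv t ht).continuousAt.continuousWithinAt)
    (fun t ht => (hderiv t (interior_subset ht)).hasDerivWithinAt) fun t ht => ?_
  rw [interior_Ioi, mem_Ioi] at ht
  have hsinh : t ≤ sinh t * cosh t := by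
    have h2t := self_le_sinh_iff.2 (by positivity : 0 ≤ 2 * t)
    rw [sinh_two_mul] at h2t
    linarith
  exact div_nonpos_of_nonpos_of_nonneg (by linarith) (sq_nonneg _)

lemma log_cosh_sub_mul_sq_le {s : ℝ} (hs : 0 < s) (t : ℝ) :
    log (cosh t) - tanh s / (2 * s) * t ^ 2 ≤ log (cosh s) - tanh s / (2 * s) * s ^ 2 := by
  set F : ℝ → ℝ := fun t => log (cosh t) - tanh s / (2 * s) * t ^ 2
  have hderiv (t : ℝ) : HasDerivAt F (t * (tanh t / t - tanh s / s)) t := by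
    refine (((hasDerivAt_cosh t).log (cosh_pos t).ne').sub
      ((hasDerivAt_pow 2 t).const_mul _)).congr_deriv ?_
    rcases eq_or_ne t 0 with rfl | ht
    · simp
    · simp only [tanh_eq_sinh_div_cosh]; field_simp; ring
  have hcont : Continuous F := continuous_iff_continuousAt.2 fun t => (hderiv t).continuousAt
  have hmono : MonotoneOn F (Icc 0 s) := by
    refine monotoneOn_of_hasDerivWithinAt_nonneg (convex_Icc 0 s) hcont.continuousOn
      (fun t _ => (hderiv t).hasDerivWithinAt) fun t ht => ?_
    rw [interior_Icc] at ht
    exact mul_nonneg ht.1.le (sub_nonneg.2 (antitoneOn_tanh_div_self ht.1 hs ht.2.le))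
  have hanti : AntitoneOn F (Ici s) := by
    refine antitoneOn_of_hasDerivWithinAt_nonpos (convex_Ici s) hcont.continuousOn
      (fun t _ => (hderiv t).hasDerivWithinAt) fun t ht => ?_
    rw [interior_Ici, mem_Ioi] at ht
    exact mul_nonpos_of_nonneg_of_nonpos (hs.trans ht).le
      (sub_nonpos.2 (antitoneOn_tanh_div_self hs (hs.trans ht) ht.le))
  have hF_abs : F t = F |t| := by simp only [F, cosh_abs, sq_abs]
  show F t ≤ F s
  rw [hF_abs]
  rcases le_total |t| s with h | h
  · exact hmono ⟨abs_nonneg t, h⟩ ⟨hs.le, le_rfl⟩ h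
  · exact hanti self_mem_Ici h h

end Real

/-- Jaakkola–Jordan quadratic lower bound on the log-logistic function. -/
theorem jaakkola_bound (x ξ : ℝ) (hξ : 0 < ξ) :
    Real.log (g x) ≥ Real.log (g ξ) + (x - ξ) / 2 - lam ξ * (x ^ 2 - ξ ^ 2) := by
  have h := log_cosh_sub_mul_sq_le (half_pos hξ) (x / 2)
  rw [log_g, log_g, lam_eq]
  field_simp at h ⊢
  linarith
end

section
/- The function λ(ξ) = (g(ξ) - 1/2)/(2ξ), where g is the logistic sigmoid, is strictly decreasing on (0, ∞). -/
open Real Set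

theorem strictAntiOn_div_self_of_mul_deriv_lt {f f' : ℝ → ℝ}
    (hf : ∀ x > 0, HasDerivAt f (f' x) x) (hlt : ∀ x > 0, x * f' x < f x) :
    StrictAntiOn (fun x => f x / x) (Ioi 0) := by
  have hquot : ∀ x > 0, HasDerivAt (fun x => f x / x) ((f' x * x - f x * 1) / x ^ 2) x :=
    fun x hx => (hf x hx).div (hasDerivAt_id x) hx.ne'
  refine strictAntiOn_of_hasDerivWithinAt_neg (f' := fun x => (f' x * x - f x * 1) / x ^ 2)
    (convex_Ioi 0)
    (fun x hx => (hquot x hx).continuousAt.continuousWithinAt) (fun x hx => ?_) (fun x hx => ?_)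
  · rw [interior_Ioi] at hx ⊢
    exact (hquot x hx).hasDerivWithinAt
  · rw [interior_Ioi] at hx
    have hx_lt := hlt x hx
    exact div_neg_of_neg_of_pos (by linarith) (pow_pos hx 2)

theorem hasDerivAt_g (x : ℝ) : HasDerivAt g (exp (-x) / (1 + exp (-x)) ^ 2) x := by
  have hden : HasDerivAt (fun x => 1 + exp (-x)) (-exp (-x)) x := by
    simpa using ((hasDerivAt_exp (-x)).comp x (hasDerivAt_neg x)).const_add 1
  rw [show g = (fun x => 1 + exp (-x))⁻¹ from rfl]
  simpa [neg_div] using hden.inv (by positivity)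

theorem mul_deriv_g_lt {x : ℝ} (hx : 0 < x) :
    x * (exp (-x) / (1 + exp (-x)) ^ 2) < g x - 1/2 := by
  have he : 0 < exp (-x) := exp_pos _
  have hsinh : 2 * x < exp x - exp (-x) := by
    have := self_lt_sinh_iff.mpr hx
    rw [sinh_eq] at this
    linarith
  have key : 2 * x * exp (-x) < 1 - exp (-x) ^ 2 :=
    calc 2 * x * exp (-x) < (exp x - exp (-x)) * exp (-x) := mul_lt_mul_of_pos_right hsinh he
      _ = 1 - exp (-x) ^ 2 := by rw [sub_mul, ← exp_add]; simp [sq]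
  have hgx : g x - 1/2 = (1 - exp (-x)) / (2 * (1 + exp (-x))) := by
    unfold g; field_simp; ring
  rw [hgx, mul_div_assoc', div_lt_div_iff₀ (by positivity) (by positivity)]
  linarith [mul_lt_mul_of_pos_left key (add_pos one_pos he)]

/-- The coefficient `λ` of the Jaakkola–Jordan bound is strictly decreasing on `(0, ∞)`. -/
theorem lam_strictAntiOn : StrictAntiOn lam (Set.Ioi (0 : ℝ)) := by
  have hlam : lam = fun ξ => (g ξ - 1/2) / 2 / ξ := by
    funext ξ
    rw [lam, div_div]
  rw [hlam]
  refine strictAntiOn_div_self_of_mul_deriv_lt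
    (f' := fun x => exp (-x) / (1 + exp (-x)) ^ 2 / 2)
    (fun x _ => ((hasDerivAt_g x).sub_const _).div_const 2) (fun x hx => ?_)
  rw [← mul_div_assoc]
  exact div_lt_div_of_pos_right (mul_deriv_g_lt hx) two_pos
end

section
/- Fix c > 0 and define F(ξ) = log g(ξ) - ξ/2 - λ(ξ)(c - ξ²) on (0,∞), where g is the logistic sigmoid and λ(ξ) = (g(ξ)-1/2)/(2ξ). Then F'(ξ) = -λ'(ξ)(c - ξ²), and consequently ξ̂ = √c is a critical point of F. -/
/-!
Since `(log g)' = 1 - g` and `2 ξ λ(ξ) = g(ξ) - 1/2`, the derivative `1 - g - 1/2` of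
`log g(ξ) - ξ/2` is `-2 ξ λ(ξ)`, which cancels the term `2 ξ λ(ξ)` coming from
differentiating the factor `c - ξ²`. Only `-λ'(ξ)(c - ξ²)` survives, and it vanishes at `ξ² = c`.
-/

lemma g_pos (x : ℝ) : 0 < g x := by
  unfold g
  positivity

lemma hasDerivAt_g_s14 (x : ℝ) : HasDerivAt g (g x * (1 - g x)) x := by
  have hexp : HasDerivAt (fun x : ℝ => 1 + Real.exp (-x)) (-Real.exp (-x)) x := by
    simpa using ((Real.hasDerivAt_exp (-x)).comp x (hasDerivAt_neg x)).const_add 1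
  refine (hexp.inv (by positivity)).congr_deriv ?_
  unfold g
  field_simp
  ring

lemma hasDerivAt_log_g (x : ℝ) : HasDerivAt (fun x => Real.log (g x)) (1 - g x) x := by
  convert (hasDerivAt_g_s14 x).log (g_pos x).ne' using 1
  field_simp [(g_pos x).ne']

lemma two_mul_mul_lam {ξ : ℝ} (hξ : ξ ≠ 0) : 2 * ξ * lam ξ = g ξ - 1/2 := by
  unfold lam
  field_simp

lemma differentiableAt_lam {ξ : ℝ} (hξ : ξ ≠ 0) : DifferentiableAt ℝ lam ξ :=
  ((hasDerivAt_g_s14 ξ).differentiableAt.sub_const _).div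
    ((differentiableAt_const _).mul differentiableAt_id) (mul_ne_zero two_ne_zero hξ)

lemma hasDerivAt_log_g_sub_lam_mul (c : ℝ) {ξ : ℝ} (hξ : ξ ≠ 0) :
    HasDerivAt (fun ξ => Real.log (g ξ) - ξ / 2 - lam ξ * (c - ξ ^ 2))
      (-(deriv lam ξ) * (c - ξ ^ 2)) ξ := by
  have hhalf : HasDerivAt (fun x : ℝ => x / 2) (1 / 2) ξ := (hasDerivAt_id ξ).div_const 2
  have hprod := (differentiableAt_lam hξ).hasDerivAt.mul
    ((hasDerivAt_const ξ c).sub (hasDerivAt_pow 2 ξ))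
  refine (((hasDerivAt_log_g ξ).sub hhalf).sub hprod).congr_deriv ?_
  simp only [Pi.sub_apply]
  linear_combination two_mul_mul_lam hξ

/-- The ξ-dependent part of the variational lower bound,
`F(ξ) = log g(ξ) - ξ/2 - λ(ξ)(c - ξ²)`, satisfies `F'(ξ) = -λ'(ξ)(c - ξ²)`,
so `ξ̂ = √c` is a critical point of `F`. -/
theorem optimal_xi (c : ℝ) (hc : 0 < c) :
    (∀ ξ : ℝ, 0 < ξ →
      HasDerivAt (fun ξ => Real.log (g ξ) - ξ / 2 - lam ξ * (c - ξ ^ 2))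
        (-(deriv lam ξ) * (c - ξ ^ 2)) ξ) ∧
    HasDerivAt (fun ξ => Real.log (g ξ) - ξ / 2 - lam ξ * (c - ξ ^ 2))
      0 (Real.sqrt c) := by
  refine ⟨fun ξ hξ => hasDerivAt_log_g_sub_lam_mul c hξ.ne', ?_⟩
  have hcrit := hasDerivAt_log_g_sub_lam_mul c (Real.sqrt_pos.mpr hc).ne'
  rwa [Real.sq_sqrt hc.le, sub_self, mul_zero] at hcrit
end
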